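/- arXiv:2312.00967 — 3 statements merged into one kernel-verified Lean document; each statement's English description precedes it below -/
import Mathlib

section
/- For every initial condition (x₀, y₀) ∈ ℝ², the nonlinear pendulum ODE has a global-in-time solution: there exist differentiable functions x, y : ℝ → ℝ with x(0) = x₀, y(0) = y₀, such that for every t ∈ ℝ the derivative of x at t equals y(t) and the derivative of y at t equals −sin(2π·x(t)). -/
/-! The pendulum field `(x, y) ↦ (y, -sin 2πx)` is globally Lipschitz. For a `K`-Lipschitz field,
Picard–Lindelöf yields a solution through any point on a time interval of radius `(K + 1)⁻¹`,
whatever the point. Gluing such pieces end to end gives solutions on arbitrarily long intervals,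
and by uniqueness these are all restrictions of a single global solution. -/

open Real Set
open scoped NNReal Topology

theorem Set.piecewise_Iic_eqOn_Ici {α β : Type*} [LinearOrder α]
    {f g : α → β} {b : α} (hb : f b = g b) : EqOn ((Iic b).piecewise f g) g (Ici b) := by
  intro t ht
  rcases (mem_Ici.1 ht).eq_or_lt with rfl | hlt
  · exact (piecewise_eq_of_mem _ _ _ (mem_Iic.2 le_rfl)).trans hb
  · exact piecewise_eq_of_notMem _ _ _ (notMem_Iic.2 hlt)

section IntegralCurve

variable {E : Type*} [NormedAddCommGroup E] [NormedSpace ℝ E] {v : ℝ → E → E}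

theorem IsIntegralCurveOn.piecewise_Icc {γ₁ γ₂ : ℝ → E} {a b c : ℝ}
    (h₁ : IsIntegralCurveOn γ₁ v (Icc a b)) (h₂ : IsIntegralCurveOn γ₂ v (Icc b c))
    (hab : a ≤ b) (hbc : b ≤ c) (hb : γ₁ b = γ₂ b) :
    IsIntegralCurveOn ((Iic b).piecewise γ₁ γ₂) v (Icc a c) := by
  set γ := (Iic b).piecewise γ₁ γ₂
  have within {s : Set ℝ} {γ' : ℝ → E} (hs : IsClosed s) (hγ' : IsIntegralCurveOn γ' v s)
      (heq : EqOn γ γ' s) (t : ℝ) : HasDerivWithinAt γ (v t (γ t)) s t := by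
    by_cases ht : t ∈ s
    · rw [heq ht]; exact (hγ' t ht).congr heq (heq ht)
    · exact HasFDerivWithinAt.of_notMem_closure (hs.closure_eq.symm ▸ ht)
  intro t _
  rw [← Icc_union_Icc_eq_Icc hab hbc]
  exact (within isClosed_Icc h₁ (fun t ht ↦ piecewise_eq_of_mem _ _ _ ht.2) t).union
    (within isClosed_Icc h₂ (fun t ht ↦ piecewise_Iic_eqOn_Ici hb ht.1) t)

theorem exists_isIntegralCurveOn_Icc_natCast_mul {ε : ℝ} (hε : 0 ≤ ε)
    (hloc : ∀ t₀ x, ∃ γ : ℝ → E, γ t₀ = x ∧ IsIntegralCurveOn γ v (Icc (t₀ - ε) (t₀ + ε)))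
    (x : E) (n : ℕ) :
    ∃ γ : ℝ → E, γ 0 = x ∧ IsIntegralCurveOn γ v (Icc (-(n * ε)) (n * ε)) := by
  induction n with
  | zero =>
    obtain ⟨γ, hγ0, hγ⟩ := hloc 0 x
    exact ⟨γ, hγ0, hγ.mono (Icc_subset_Icc (by simp [hε]) (by simp [hε]))⟩
  | succ n ih =>
    obtain ⟨γ, hγ0, hγ⟩ := ih
    set T : ℝ := n * ε
    have hT : 0 ≤ T := by positivity
    obtain ⟨γr, hγr0, hγr⟩ := hloc T (γ T)
    obtain ⟨γl, hγl0, hγl⟩ := hloc (-T) (γ (-T))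
    set γ' := (Iic T).piecewise γ γr
    have hγ'γ : EqOn γ' γ (Iic T) := fun t ht ↦ piecewise_eq_of_mem _ _ _ ht
    have hγ' : IsIntegralCurveOn γ' v (Icc (-T) (T + ε)) :=
      hγ.piecewise_Icc (hγr.mono (Icc_subset_Icc (by linarith) le_rfl))
        (by linarith) (by linarith) hγr0.symm
    have hγl' : γl (-T) = γ' (-T) := by rw [hγl0, hγ'γ (by simp [hT])]
    refine ⟨(Iic (-T)).piecewise γl γ', ?_, ?_⟩
    · rw [piecewise_Iic_eqOn_Ici hγl' (by simp [hT]), hγ'γ hT, hγ0]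
    · convert (hγl.mono (Icc_subset_Icc le_rfl (by linarith))).piecewise_Icc hγ'
        (by linarith) (by linarith) hγl' using 2 <;> push_cast <;> ring

variable {K : ℝ≥0}

theorem IsIntegralCurveOn.eqOn_Icc_of_lipschitzWith (hv : ∀ t, LipschitzWith K (v t))
    {γ γ' : ℝ → E} {a b t₀ : ℝ} (hγ : IsIntegralCurveOn γ v (Icc a b))
    (hγ' : IsIntegralCurveOn γ' v (Icc a b)) (ht₀ : t₀ ∈ Ioo a b) (h : γ t₀ = γ' t₀) :
    EqOn γ γ' (Icc a b) :=
  ODE_solution_unique_of_mem_Icc (s := fun _ ↦ univ) (fun t _ ↦ (hv t).lipschitzOnWith) ht₀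
    hγ.continuousOn
    (fun t ht ↦ (hγ t (Ioo_subset_Icc_self ht)).hasDerivAt (Icc_mem_nhds ht.1 ht.2))
    (fun _ _ ↦ mem_univ _) hγ'.continuousOn
    (fun t ht ↦ (hγ' t (Ioo_subset_Icc_self ht)).hasDerivAt (Icc_mem_nhds ht.1 ht.2))
    (fun _ _ ↦ mem_univ _) h

theorem exists_isIntegralCurve_of_forall_isIntegralCurveOn_Icc
    (hv : ∀ t, LipschitzWith K (v t)) {x : E}
    (h : ∀ T, ∃ γ : ℝ → E, γ 0 = x ∧ IsIntegralCurveOn γ v (Icc (-T) T)) :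
    ∃ γ : ℝ → E, γ 0 = x ∧ IsIntegralCurve γ v := by
  choose γ hγ0 hγ using h
  have hagree {S T : ℝ} (hS : 0 < S) (hT : 0 < T) :
      EqOn (γ S) (γ T) (Icc (-min S T) (min S T)) :=
    (hγ S).mono (Icc_subset_Icc (by simp) (min_le_left _ _)) |>.eqOn_Icc_of_lipschitzWith hv
      ((hγ T).mono (Icc_subset_Icc (by simp) (min_le_right _ _)))
      ⟨by simp [hS, hT], by simp [hS, hT]⟩ ((hγ0 S).trans (hγ0 T).symm)
  refine ⟨fun t ↦ γ (|t| + 1) t, by simpa using hγ0 1, fun t ↦ ?_⟩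
  set T := |t| + 1
  have htT : t ∈ Ioo (-T) T := abs_lt.1 (lt_add_one _)
  have hloc : (fun s ↦ γ (|s| + 1) s) =ᶠ[𝓝 t] γ T := by
    filter_upwards [Ioo_mem_nhds htT.1 htT.2] with s hs
    have hsT : |s| < T := abs_lt.2 hs
    exact hagree (by positivity) (by positivity) (abs_le.1 (le_min (by linarith) hsT.le))
  exact ((hγ T t (Ioo_subset_Icc_self htT)).hasDerivAt (Icc_mem_nhds htT.1 htT.2))
    |>.congr_of_eventuallyEq hloc

theorem exists_isIntegralCurve_of_uniform_time (hv : ∀ t, LipschitzWith K (v t)) {ε : ℝ}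
    (hε : 0 < ε)
    (hloc : ∀ t₀ x, ∃ γ : ℝ → E, γ t₀ = x ∧ IsIntegralCurveOn γ v (Icc (t₀ - ε) (t₀ + ε)))
    (x : E) : ∃ γ : ℝ → E, γ 0 = x ∧ IsIntegralCurve γ v := by
  refine exists_isIntegralCurve_of_forall_isIntegralCurveOn_Icc hv fun T ↦ ?_
  obtain ⟨n, hn⟩ := exists_nat_ge (T / ε)
  have hTn : T ≤ n * ε := (div_le_iff₀ hε).1 hn
  obtain ⟨γ, hγ0, hγ⟩ := exists_isIntegralCurveOn_Icc_natCast_mul hε.le hloc x n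
  exact ⟨γ, hγ0, hγ.mono (Icc_subset_Icc (neg_le_neg hTn) hTn)⟩

end IntegralCurve

section Autonomous

variable {E : Type*} [NormedAddCommGroup E] [NormedSpace ℝ E] [CompleteSpace E] {v : E → E}
  {K : ℝ≥0}

-- On the ball of radius `‖v x‖` about `x` the field is bounded by `(K + 1) ‖v x‖`, so a solution
-- starting at `x` cannot leave that ball before time `(K + 1)⁻¹`.
theorem LipschitzWith.exists_isIntegralCurveOn_Icc (hv : LipschitzWith K v) (t₀ : ℝ) (x : E) :
    ∃ γ : ℝ → E, γ t₀ = x ∧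
      IsIntegralCurveOn γ (fun _ ↦ v) (Icc (t₀ - (K + 1)⁻¹) (t₀ + (K + 1)⁻¹)) := by
  have hε : (0 : ℝ) ≤ (K + 1)⁻¹ := by positivity
  have hbound : ∀ y ∈ Metric.closedBall x ‖v x‖₊, ‖v y‖ ≤ ((K + 1) * ‖v x‖₊ : ℝ≥0) := by
    intro y hy
    have hy : ‖y - x‖ ≤ ‖v x‖ := mem_closedBall_iff_norm.1 hy
    calc ‖v y‖ ≤ ‖v x‖ + ‖v y - v x‖ := norm_le_norm_add_norm_sub' _ _
      _ ≤ ‖v x‖ + K * ‖v x‖ := by gcongr; exact (hv.norm_sub_le y x).trans (by gcongr)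
      _ = ((K + 1) * ‖v x‖₊ : ℝ≥0) := by push_cast; ring
  have hPL : IsPicardLindelof (fun _ ↦ v) (tmin := t₀ - (K + 1)⁻¹) (tmax := t₀ + (K + 1)⁻¹)
      ⟨t₀, by constructor <;> linarith⟩ x ‖v x‖₊ 0 ((K + 1) * ‖v x‖₊) K := by
    refine .of_time_independent hbound hv.lipschitzOnWith ?_
    simp only [add_sub_cancel_left, sub_sub_cancel, max_self, NNReal.coe_zero, sub_zero]
    push_cast
    rw [mul_comm, inv_mul_cancel_left₀ (by positivity)]
  exact hPL.exists_eq_forall_mem_Icc_hasDerivWithinAt₀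

theorem LipschitzWith.exists_isIntegralCurve (hv : LipschitzWith K v) (x : E) :
    ∃ γ : ℝ → E, γ 0 = x ∧ IsIntegralCurve γ (fun _ ↦ v) :=
  exists_isIntegralCurve_of_uniform_time (fun _ ↦ hv) (by positivity)
    hv.exists_isIntegralCurveOn_Icc x

end Autonomous

noncomputable def pendulumField (p : ℝ × ℝ) : ℝ × ℝ := (p.2, -sin (2 * π * p.1))

theorem lipschitzWith_pendulumField : LipschitzWith (2 * π).toNNReal pendulumField := by
  have hsin : LipschitzWith (1 * (‖2 * π‖₊ * 1)) fun p : ℝ × ℝ ↦ sin (2 * π * p.1) :=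
    lipschitzWith_sin.comp ((lipschitzWith_smul (2 * π)).comp LipschitzWith.prod_fst)
  refine (LipschitzWith.prod_snd.prodMk hsin.neg).weaken (max_le ?_ ?_)
  · rw [one_le_toNNReal]; linarith [pi_gt_three]
  · rw [one_mul, mul_one, ← NNReal.coe_le_coe, coe_nnnorm, coe_toNNReal _ two_pi_pos.le,
      norm_of_nonneg two_pi_pos.le]

/-- For every initial condition `(x₀, y₀) ∈ ℝ²` the nonlinear pendulum ODE
`ẋ = y`, `ẏ = -sin(2πx)` has a global-in-time solution. -/
theorem pendulum_global_solution (x₀ y₀ : ℝ) :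
    ∃ x y : ℝ → ℝ, x 0 = x₀ ∧ y 0 = y₀ ∧
      (∀ t : ℝ, HasDerivAt x (y t) t) ∧
      (∀ t : ℝ, HasDerivAt y (-Real.sin (2 * π * x t)) t) := by
  obtain ⟨γ, hγ0, hγ⟩ := lipschitzWith_pendulumField.exists_isIntegralCurve (x₀, y₀)
  exact ⟨fun t ↦ (γ t).1, fun t ↦ (γ t).2, congrArg Prod.fst hγ0, congrArg Prod.snd hγ0,
    fun t ↦ (hγ t).fst, fun t ↦ (hγ t).snd⟩
end

section
/- Let n, m be positive integers, K an n×n real symmetric positive definite matrix, W an n×n real symmetric positive semidefinite matrix, G an m×n real matrix, ε > 0, and h_bd ∈ ℝⁿ. Define the objective f(c) = (Kc − h_bd)ᵀ·W·(Kc − h_bd) + ‖G·K·c‖² + ε·cᵀ·K·c for c ∈ ℝⁿ. Then f has a unique global minimizer over ℝⁿ, and a vector c ∈ ℝⁿ minimizes f if and only if it satisfies the normal equation ((W + Gᵀ·G)·K + ε·I)·c = W·h_bd. -/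
open Matrix

/-!
Expanding the residuals, `f c = cᵀ M c - 2 cᵀ (Kᵀ W h_bd) + const` with
`M = Kᵀ (W + Gᵀ G) K + ε K`, which is positive definite because `K` is and `ε > 0`.
Completing the square around the unique solution `x` of `M x = Kᵀ W h_bd` gives
`f d = (d - x)ᵀ M (d - x) + const`, so `x` is the only minimizer.
Since `M = K ((W + Gᵀ G) K + ε I)` and `K` is invertible, this is the normal equation.
-/

section Expansion

variable {ι κ R : Type*} [Fintype ι] [Fintype κ] [CommRing R]

theorem Matrix.dotProduct_transpose_mul_mul_mulVec (A : Matrix κ ι R) (B : Matrix κ κ R)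
    (c : ι → R) : c ⬝ᵥ (Aᵀ * B * A) *ᵥ c = A *ᵥ c ⬝ᵥ B *ᵥ A *ᵥ c := by
  rw [← mulVec_mulVec, ← mulVec_mulVec, dotProduct_transpose_mulVec, dotProduct_comm]

theorem Matrix.IsSymm.sub_dotProduct_mulVec_sub {W : Matrix κ κ R} (hW : W.IsSymm)
    (u v : κ → R) :
    (u - v) ⬝ᵥ W *ᵥ (u - v) = u ⬝ᵥ W *ᵥ u - 2 * (u ⬝ᵥ W *ᵥ v) + v ⬝ᵥ W *ᵥ v := by
  have hcross : v ⬝ᵥ W *ᵥ u = u ⬝ᵥ W *ᵥ v := by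
    rw [← hW.eq, dotProduct_transpose_mulVec, hW.eq]
  simp only [mulVec_sub, dotProduct_sub, sub_dotProduct, hcross]
  ring

end Expansion

section Minimization

variable {ι : Type*} [Fintype ι] [DecidableEq ι] {M : Matrix ι ι ℝ} {b : ι → ℝ} {k : ℝ}
  {f : (ι → ℝ) → ℝ}

theorem Matrix.PosDef.forall_le_iff_mulVec_eq (hM : M.PosDef)
    (hf : ∀ c, f c = c ⬝ᵥ M *ᵥ c - 2 * (c ⬝ᵥ b) + k) (c : ι → ℝ) :
    (∀ d, f c ≤ f d) ↔ M *ᵥ c = b := by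
  have hMs : M.IsSymm := by simpa using hM.isHermitian
  have hinj : Function.Injective M.mulVec := mulVec_injective_iff_isUnit.2 hM.isUnit
  obtain ⟨x, hx⟩ := mulVec_surjective_iff_isUnit.2 hM.isUnit b
  have hsq : ∀ d, f d = (d - x) ⬝ᵥ M *ᵥ (d - x) + (k - x ⬝ᵥ M *ᵥ x) := by
    intro d
    rw [hf, hMs.sub_dotProduct_mulVec_sub, hx]
    ring
  simp only [hsq, add_le_add_iff_right]
  constructor
  · intro hmin
    by_contra hne
    have hcx : c - x ≠ 0 := sub_ne_zero.2 fun h => hne (h ▸ hx)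
    have := (hM.dotProduct_mulVec_pos hcx).trans_le (hmin x)
    simp at this
  · intro hc d
    rw [hinj (hc.trans hx.symm), sub_self, zero_dotProduct]
    simpa using hM.posSemidef.dotProduct_mulVec_nonneg (d - x)

theorem Matrix.PosDef.existsUnique_forall_le (hM : M.PosDef)
    (hf : ∀ c, f c = c ⬝ᵥ M *ᵥ c - 2 * (c ⬝ᵥ b) + k) :
    ∃! c, ∀ d, f c ≤ f d := by
  simp_rw [hM.forall_le_iff_mulVec_eq hf]
  exact Function.Bijective.existsUnique
    ⟨mulVec_injective_iff_isUnit.2 hM.isUnit, mulVec_surjective_iff_isUnit.2 hM.isUnit⟩ b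

end Minimization

theorem bvp_least_squares_normal_equation_general {n m : ℕ}
    (K : Matrix (Fin n) (Fin n) ℝ) (hK : K.PosDef)
    (W : Matrix (Fin n) (Fin n) ℝ) (hW : W.PosSemidef)
    (G : Matrix (Fin m) (Fin n) ℝ) (ε : ℝ) (hε : 0 < ε)
    (h_bd : Fin n → ℝ) :
    let f : (Fin n → ℝ) → ℝ := fun c =>
      (K.mulVec c - h_bd) ⬝ᵥ W.mulVec (K.mulVec c - h_bd) +
        (G * K).mulVec c ⬝ᵥ (G * K).mulVec c + ε * (c ⬝ᵥ K.mulVec c)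
    (∃! c : Fin n → ℝ, ∀ d : Fin n → ℝ, f c ≤ f d) ∧
      ∀ c : Fin n → ℝ, (∀ d : Fin n → ℝ, f c ≤ f d) ↔
        ((W + Gᵀ * G) * K + ε • (1 : Matrix (Fin n) (Fin n) ℝ)).mulVec c =
          W.mulVec h_bd := by
  intro f
  have hKs : K.IsSymm := by simpa using hK.isHermitian
  have hWs : W.IsSymm := by simpa using hW.isHermitian
  have hM : (Kᵀ * (W + Gᵀ * G) * K + ε • K).PosDef := by
    have hP := (hW.add (posSemidef_conjTranspose_mul_self G)).conjTranspose_mul_mul_same K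
    rw [conjTranspose_eq_transpose_of_trivial, conjTranspose_eq_transpose_of_trivial] at hP
    exact PosDef.posSemidef_add hP (hK.smul hε)
  have hf : ∀ c, f c = c ⬝ᵥ (Kᵀ * (W + Gᵀ * G) * K + ε • K) *ᵥ c -
      2 * (c ⬝ᵥ (Kᵀ * W) *ᵥ h_bd) + h_bd ⬝ᵥ W *ᵥ h_bd := by
    intro c
    simp only [f]
    rw [hWs.sub_dotProduct_mulVec_sub, add_mulVec, dotProduct_add, smul_mulVec, dotProduct_smul,
      dotProduct_transpose_mul_mul_mulVec, add_mulVec, dotProduct_add, ← mulVec_mulVec c G,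
      ← mulVec_mulVec _ Gᵀ, dotProduct_transpose_mulVec, ← mulVec_mulVec _ Kᵀ,
      dotProduct_transpose_mulVec, dotProduct_comm (K *ᵥ c) (W *ᵥ h_bd), smul_eq_mul]
    ring
  have hnormal : ∀ c, (Kᵀ * (W + Gᵀ * G) * K + ε • K) *ᵥ c = (Kᵀ * W) *ᵥ h_bd ↔
      ((W + Gᵀ * G) * K + ε • (1 : Matrix (Fin n) (Fin n) ℝ)) *ᵥ c = W *ᵥ h_bd := by
    intro c
    rw [hKs.eq, Matrix.mul_assoc, ← Matrix.mul_one (ε • K), Matrix.smul_mul, ← Matrix.mul_smul,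
      ← Matrix.mul_add, ← mulVec_mulVec, ← mulVec_mulVec]
    exact (mulVec_injective_iff_isUnit.2 hK.isUnit).eq_iff
  exact ⟨hM.existsUnique_forall_le hf,
    fun c => (hM.forall_le_iff_mulVec_eq hf c).trans (hnormal c)⟩

/-- The least-squares objective
`f c = (Kc - h_bd)ᵀ W (Kc - h_bd) + ‖G K c‖² + ε cᵀ K c`
(with `K` symmetric positive definite, `W` symmetric positive semidefinite, `ε > 0`)
has a unique global minimizer, and `c` minimizes `f` iff it satisfies the normal
equation `((W + Gᵀ G) K + ε I) c = W h_bd`. -/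
theorem bvp_least_squares_normal_equation {n m : ℕ} (hn : 0 < n) (hm : 0 < m)
    (K : Matrix (Fin n) (Fin n) ℝ) (hK : K.PosDef)
    (W : Matrix (Fin n) (Fin n) ℝ) (hW : W.PosSemidef)
    (G : Matrix (Fin m) (Fin n) ℝ) (ε : ℝ) (hε : 0 < ε)
    (h_bd : Fin n → ℝ) :
    let f : (Fin n → ℝ) → ℝ := fun c =>
      (K.mulVec c - h_bd) ⬝ᵥ W.mulVec (K.mulVec c - h_bd) +
        (G * K).mulVec c ⬝ᵥ (G * K).mulVec c + ε * (c ⬝ᵥ K.mulVec c)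
    (∃! c : Fin n → ℝ, ∀ d : Fin n → ℝ, f c ≤ f d) ∧
      ∀ c : Fin n → ℝ, (∀ d : Fin n → ℝ, f c ≤ f d) ↔
        ((W + Gᵀ * G) * K + ε • (1 : Matrix (Fin n) (Fin n) ℝ)).mulVec c =
          W.mulVec h_bd :=
  bvp_least_squares_normal_equation_general K hK W hW G ε hε h_bd
end

section
/- Let n, m be positive integers, K an n×n real symmetric positive definite matrix, W an n×n real symmetric positive semidefinite matrix, G an m×n real matrix, and ε > 0. Then the minimum over nonzero c ∈ ℝⁿ of the Rayleigh quotient (‖G·K·c‖² + (Kc)ᵀ·W·(Kc) + ε·cᵀ·K·c) / ‖K·c‖² is attained, and equals the smallest eigenvalue of the symmetric matrix M = Gᵀ·G + W + ε·K⁻¹. -/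
/-!
With `h = K c` the numerator is `hᵀ M h`, since `cᵀ K c = hᵀ K⁻¹ h`, and `c ↦ K c` permutes the
nonzero vectors because `K` is invertible. So the quotient takes exactly the values of the Rayleigh
quotient of `M`. That one is minimised by an eigenvector for the smallest eigenvalue `λ`, and is
bounded below by `λ` because `M - λ I = U (D - λ I) Uᴴ` is positive semidefinite.
-/

open Matrix

namespace Matrix

variable {ι : Type*} [Fintype ι]

theorem dotProduct_self_pos {v : ι → ℝ} (hv : v ≠ 0) : 0 < v ⬝ᵥ v := by
  simpa using dotProduct_star_self_pos_iff.mpr hv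

variable [DecidableEq ι]

open scoped ComplexOrder in
theorem IsHermitian.posSemidef_sub_smul_one {𝕜 : Type*} [RCLike 𝕜] {A : Matrix ι ι 𝕜}
    (hA : A.IsHermitian) {c : ℝ} (hc : ∀ i, c ≤ hA.eigenvalues i) :
    (A - (c : 𝕜) • 1).PosSemidef := by
  set U : Matrix ι ι 𝕜 := (hA.eigenvectorUnitary : Matrix ι ι 𝕜)
  have hU : U * star U = 1 := Unitary.mul_star_self_of_mem hA.eigenvectorUnitary.prop
  have hdiag : A - (c : 𝕜) • 1 =
      U * diagonal (fun i => ((hA.eigenvalues i - c : ℝ) : 𝕜)) * Uᴴ := by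
    conv_lhs => rw [hA.spectral_theorem, Unitary.conjStarAlgAut_apply]
    rw [← star_eq_conjTranspose]
    simp only [RCLike.ofReal_sub]
    rw [← diagonal_sub, mul_sub, sub_mul, ← smul_one_eq_diagonal, mul_smul_comm, mul_one,
      smul_mul_assoc, hU]
    rfl
  rw [hdiag]
  refine (PosSemidef.diagonal fun i => ?_).mul_mul_conjTranspose_same U
  simpa using hc i

theorem IsHermitian.eigenvalues_inf'_mul_dotProduct_self_le {A : Matrix ι ι ℝ}
    (hA : A.IsHermitian) (hne : (Finset.univ : Finset ι).Nonempty) (v : ι → ℝ) :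
    Finset.univ.inf' hne hA.eigenvalues * (v ⬝ᵥ v) ≤ v ⬝ᵥ A *ᵥ v := by
  have hpsd := hA.posSemidef_sub_smul_one (𝕜 := ℝ) (c := Finset.univ.inf' hne hA.eigenvalues)
    fun i => Finset.inf'_le hA.eigenvalues (Finset.mem_univ i)
  have := hpsd.dotProduct_mulVec_nonneg v
  simp only [star_trivial, sub_mulVec, smul_mulVec, one_mulVec, dotProduct_sub,
    dotProduct_smul, smul_eq_mul, RCLike.ofReal_real_eq_id, id] at this
  linarith

theorem IsHermitian.isLeast_rayleigh_quotient {A : Matrix ι ι ℝ} (hA : A.IsHermitian)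
    (hne : (Finset.univ : Finset ι).Nonempty) :
    IsLeast {r : ℝ | ∃ v : ι → ℝ, v ≠ 0 ∧ (v ⬝ᵥ A *ᵥ v) / (v ⬝ᵥ v) = r}
      (Finset.univ.inf' hne hA.eigenvalues) := by
  refine ⟨?_, ?_⟩
  · obtain ⟨i, -, hi⟩ := Finset.exists_mem_eq_inf' hne hA.eigenvalues
    have hv : (hA.eigenvectorBasis i : ι → ℝ) ≠ 0 := fun h =>
      hA.eigenvectorBasis.orthonormal.ne_zero i (PiLp.ext (congrFun h))
    refine ⟨hA.eigenvectorBasis i, hv, ?_⟩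
    rw [hA.mulVec_eigenvectorBasis, dotProduct_smul, smul_eq_mul,
      mul_div_cancel_right₀ _ (dotProduct_self_pos hv).ne', hi]
  · rintro r ⟨v, hv, rfl⟩
    rw [le_div_iff₀ (dotProduct_self_pos hv)]
    exact hA.eigenvalues_inf'_mul_dotProduct_self_le hne v

theorem setOf_exists_ne_zero_mulVec_eq {R β : Type*} [CommRing R] {K : Matrix ι ι R}
    (hK : IsUnit K.det) (f : (ι → R) → β) :
    {r | ∃ c, c ≠ 0 ∧ f (K *ᵥ c) = r} = {r | ∃ v, v ≠ 0 ∧ f v = r} := by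
  have hKinvK : ∀ v, K⁻¹ *ᵥ (K *ᵥ v) = v := fun v => by
    rw [mulVec_mulVec, nonsing_inv_mul K hK, one_mulVec]
  have hKKinv : ∀ v, K *ᵥ (K⁻¹ *ᵥ v) = v := fun v => by
    rw [mulVec_mulVec, mul_nonsing_inv K hK, one_mulVec]
  ext r
  constructor
  · rintro ⟨c, hc, rfl⟩
    exact ⟨K *ᵥ c, fun h => hc (by rw [← hKinvK c, h, mulVec_zero]), rfl⟩
  · rintro ⟨v, hv, rfl⟩
    exact ⟨K⁻¹ *ᵥ v, fun h => hv (by rw [← hKKinv v, h, mulVec_zero]), by rw [hKKinv]⟩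

theorem dotProduct_mulVec_transpose_mul_add_add_smul_inv {R κ : Type*} [CommRing R] [Fintype κ]
    {K : Matrix ι ι R} (hK : IsUnit K.det) (G : Matrix κ ι R) (W : Matrix ι ι R) (ε : R)
    (c : ι → R) :
    K *ᵥ c ⬝ᵥ (Gᵀ * G + W + ε • K⁻¹) *ᵥ (K *ᵥ c) =
      (G * K) *ᵥ c ⬝ᵥ (G * K) *ᵥ c + K *ᵥ c ⬝ᵥ W *ᵥ (K *ᵥ c) + ε * (c ⬝ᵥ K *ᵥ c) := by
  have hKinvK : K⁻¹ *ᵥ (K *ᵥ c) = c := by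
    rw [mulVec_mulVec, nonsing_inv_mul K hK, one_mulVec]
  rw [add_mulVec, add_mulVec, smul_mulVec, dotProduct_add, dotProduct_add, dotProduct_smul,
    smul_eq_mul, hKinvK, ← mulVec_mulVec, ← mulVec_mulVec c G, dotProduct_mulVec,
    vecMul_transpose, dotProduct_comm c]

end Matrix

theorem rayleigh_quotient_min_eq_smallest_eigenvalue_general {n m : ℕ} (hn : 0 < n)
    (K : Matrix (Fin n) (Fin n) ℝ) (hK : K.PosDef)
    (W : Matrix (Fin n) (Fin n) ℝ)
    (G : Matrix (Fin m) (Fin n) ℝ) (ε : ℝ)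
    (hM : (Gᵀ * G + W + ε • K⁻¹).IsHermitian) :
    let Q : (Fin n → ℝ) → ℝ := fun c =>
      ((G * K).mulVec c ⬝ᵥ (G * K).mulVec c +
          K.mulVec c ⬝ᵥ W.mulVec (K.mulVec c) + ε * (c ⬝ᵥ K.mulVec c)) /
        (K.mulVec c ⬝ᵥ K.mulVec c)
    IsLeast {r : ℝ | ∃ c : Fin n → ℝ, c ≠ 0 ∧ Q c = r}
      (Finset.univ.inf'
        (Finset.univ_nonempty_iff.mpr (Fin.pos_iff_nonempty.mp hn)) hM.eigenvalues) := by
  intro Q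
  have hKdet : IsUnit K.det := (isUnit_iff_isUnit_det K).mp hK.isUnit
  suffices hQ : {r | ∃ c, c ≠ 0 ∧ Q c = r} =
      {r | ∃ v, v ≠ 0 ∧ v ⬝ᵥ (Gᵀ * G + W + ε • K⁻¹) *ᵥ v / (v ⬝ᵥ v) = r} from
    hQ ▸ hM.isLeast_rayleigh_quotient _
  refine Eq.trans ?_ (setOf_exists_ne_zero_mulVec_eq hKdet _)
  simp only [Q, dotProduct_mulVec_transpose_mul_add_add_smul_inv hKdet]

/-- The minimum over nonzero `c` of the Rayleigh quotient
`(‖G K c‖² + (Kc)ᵀ W (Kc) + ε cᵀ K c) / ‖K c‖²`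
is attained and equals the smallest eigenvalue of the symmetric matrix
`M = Gᵀ G + W + ε K⁻¹`. -/
theorem rayleigh_quotient_min_eq_smallest_eigenvalue {n m : ℕ} (hn : 0 < n) (hm : 0 < m)
    (K : Matrix (Fin n) (Fin n) ℝ) (hK : K.PosDef)
    (W : Matrix (Fin n) (Fin n) ℝ) (hW : W.PosSemidef)
    (G : Matrix (Fin m) (Fin n) ℝ) (ε : ℝ) (hε : 0 < ε)
    (hM : (Gᵀ * G + W + ε • K⁻¹).IsHermitian) :
    let Q : (Fin n → ℝ) → ℝ := fun c =>
      ((G * K).mulVec c ⬝ᵥ (G * K).mulVec c +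
          K.mulVec c ⬝ᵥ W.mulVec (K.mulVec c) + ε * (c ⬝ᵥ K.mulVec c)) /
        (K.mulVec c ⬝ᵥ K.mulVec c)
    IsLeast {r : ℝ | ∃ c : Fin n → ℝ, c ≠ 0 ∧ Q c = r}
      (Finset.univ.inf'
        (Finset.univ_nonempty_iff.mpr (Fin.pos_iff_nonempty.mp hn)) hM.eigenvalues) :=
  rayleigh_quotient_min_eq_smallest_eigenvalue_general hn K hK W G ε hM
end
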